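/- arXiv:math/0702645 — 5 statements merged into one kernel-verified Lean document; each statement's English description precedes it below -/
import Mathlib

section
/- The contact bracket {F,G} = F·G' − F'·G − (1/2)·(−1)^{p(F)}·η̄(F)·η̄(G) satisfies the super Jacobi identity: (−1)^{p(F)p(H)}{F,{G,H}} + (−1)^{p(G)p(F)}{G,{H,F}} + (−1)^{p(H)p(G)}{H,{F,G}} = 0 for homogeneous F, G, H in K[x,θ]. -/
open Polynomial

/-- The superalgebra `K[x,θ]`: an element `F = f₀ + θ·f₁` is represented by the
pair `(f₀, f₁)` of polynomials in the even variable `x` (`θ² = 0`). -/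
abbrev SP := Polynomial ℝ × Polynomial ℝ

/-- Multiplication in `K[x,θ]`. -/
noncomputable def pm (F G : SP) : SP := (F.1 * G.1, F.1 * G.2 + F.2 * G.1)

/-- The even derivative `∂/∂x`. -/
noncomputable def dX (F : SP) : SP := (derivative F.1, derivative F.2)

/-- The odd derivation `η̄ = ∂/∂θ − θ·∂/∂x`. -/
noncomputable def etaBar (F : SP) : SP := (F.2, -derivative F.1)

/-- `F` is homogeneous of parity `p` (`0` = even, `1` = odd). -/
def homog (F : SP) (p : ℕ) : Prop := (p = 0 ∧ F.2 = 0) ∨ (p = 1 ∧ F.1 = 0)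

/-- The contact bracket `{F,G} = F·G' − F'·G − (1/2)(−1)^{p(F)} η̄(F)·η̄(G)`;
the argument `ε` stands for the sign `(−1)^{p(F)}`. -/
noncomputable def cb (F G : SP) (ε : ℝ) : SP :=
  pm F (dX G) - pm (dX F) G - (ε / 2) • pm (etaBar F) (etaBar G)

set_option maxHeartbeats 2000000 in
/-- The super Jacobi identity for the contact bracket:
`(−1)^{p(F)p(H)}{F,{G,H}} + (−1)^{p(G)p(F)}{G,{H,F}} + (−1)^{p(H)p(G)}{H,{F,G}} = 0`
for homogeneous `F, G, H` (note `{G,H}` has parity `p(G)+p(H)`, etc.). -/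
theorem contactBracket_superJacobi (F G H : SP) (pF pG pH : ℕ)
    (hF : homog F pF) (hG : homog G pG) (hH : homog H pH) :
    ((-1 : ℝ) ^ (pF * pH)) • cb F (cb G H ((-1 : ℝ) ^ pG)) ((-1 : ℝ) ^ pF)
      + ((-1 : ℝ) ^ (pG * pF)) • cb G (cb H F ((-1 : ℝ) ^ pH)) ((-1 : ℝ) ^ pG)
      + ((-1 : ℝ) ^ (pH * pG)) • cb H (cb F G ((-1 : ℝ) ^ pF)) ((-1 : ℝ) ^ pH) = 0 := by
  obtain ⟨f0, f1⟩ := F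
  obtain ⟨g0, g1⟩ := G
  obtain ⟨h0, h1⟩ := H
  obtain ⟨rfl, (rfl : f1 = 0)⟩ | ⟨rfl, (rfl : f0 = 0)⟩ := hF <;>
  obtain ⟨rfl, (rfl : g1 = 0)⟩ | ⟨rfl, (rfl : g0 = 0)⟩ := hG <;>
  obtain ⟨rfl, (rfl : h1 = 0)⟩ | ⟨rfl, (rfl : h0 = 0)⟩ := hH <;>
  · refine smul_right_injective SP (by norm_num : (4:ℝ) ≠ 0) ?_
    show (4:ℝ) • _ = (4:ℝ) • (0:SP)
    rw [smul_zero]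
    simp only [cb, pm, dX, etaBar]
    ext1 <;>
    · norm_num [derivative_mul, mul_add, add_mul, mul_sub, sub_mul, smul_add, smul_sub,
        smul_neg, smul_mul_assoc, mul_smul_comm, smul_smul]
      try norm_num [smul_eq_C_mul, map_ofNat]
      try ring
end

section
/- The map C_{λ,λ+3}(X d/dx)(f) = X⁽³⁾ f' + X'' f'' is a 1-cocycle on vect(1) with values in D_{λ,λ+3}. -/
open Polynomial

/-- The action `L^λ_X(f) = X f' + λ X' f` of `X d/dx` on λ-densities. -/
noncomputable def Lact (lam : ℝ) (Xp f : Polynomial ℝ) : Polynomial ℝ :=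
  Xp * derivative f + lam • (derivative Xp * f)

/-- `C_{λ,λ+3}(X d/dx)(f) = X⁽³⁾ f' + X'' f''`. -/
noncomputable def C3 (Xp f : Polynomial ℝ) : Polynomial ℝ :=
  derivative^[3] Xp * derivative f + derivative^[2] Xp * derivative^[2] f

/-- `C_{λ,λ+3}` is a 1-cocycle on `vect(1)` with values in `D_{λ,λ+3}`:
`C([X,Y]) = L^{λ,λ+3}_X(C(Y)) − L^{λ,λ+3}_Y(C(X))` where
`L^{λ,λ+3}_X(A) = L^{λ+3}_X∘A − A∘L^λ_X`. -/
theorem C3_cocycle (lam : ℝ) (Xp Yp f : Polynomial ℝ) :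
    C3 (Xp * derivative Yp - derivative Xp * Yp) f
      = Lact (lam + 3) Xp (C3 Yp f) - C3 Yp (Lact lam Xp f)
        - (Lact (lam + 3) Yp (C3 Xp f) - C3 Xp (Lact lam Yp f)) := by
  simp only [Lact, C3, Function.iterate_succ, Function.iterate_zero, Function.comp_apply,
    id_eq, map_add, map_sub, map_mul, derivative_mul, smul_add, smul_sub, smul_mul_assoc,
    Polynomial.smul_eq_C_mul, Polynomial.C_add, Polynomial.derivative_C, map_ofNat, derivative_zero, mul_zero, zero_mul]
  ring
end

section
/- The map C_{λ,λ+4}(X d/dx)(f) = −λ X⁽⁵⁾ f + X⁽⁴⁾ f' − 6 X⁽³⁾ f'' − 4 X'' f⁽³⁾ is a 1-cocycle on vect(1) with values in D_{λ,λ+4}. -/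
open Polynomial

/-- `C_{λ,λ+4}(X d/dx)(f) = −λ X⁽⁵⁾ f + X⁽⁴⁾ f' − 6 X⁽³⁾ f'' − 4 X'' f⁽³⁾`. -/
noncomputable def C4 (lam : ℝ) (Xp f : Polynomial ℝ) : Polynomial ℝ :=
  (-lam) • (derivative^[5] Xp * f) + derivative^[4] Xp * derivative f
    - (6 : ℝ) • (derivative^[3] Xp * derivative^[2] f)
    - (4 : ℝ) • (derivative^[2] Xp * derivative^[3] f)

/-- `C_{λ,λ+4}` is a 1-cocycle on `vect(1)` with values in `D_{λ,λ+4}`: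
`C([X,Y]) = L^{λ+4}_X∘C(Y) − C(Y)∘L^λ_X − L^{λ+4}_Y∘C(X) + C(X)∘L^λ_Y`,
with `[X,Y] = XY' − X'Y`. -/
theorem C4_cocycle (lam : ℝ) (Xp Yp f : Polynomial ℝ) :
    C4 lam (Xp * derivative Yp - derivative Xp * Yp) f
      = Lact (lam + 4) Xp (C4 lam Yp f) - C4 lam Yp (Lact lam Xp f)
        - Lact (lam + 4) Yp (C4 lam Xp f) + C4 lam Xp (Lact lam Yp f) := by
  simp only [C4, Lact, Function.iterate_succ_apply', Function.iterate_zero_apply]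
  simp only [derivative_add, derivative_sub, derivative_mul, derivative_smul]
  -- `ring` cannot see through the `ℝ`-action on `ℝ[X]`, so scalars become constant polynomials.
  simp only [smul_eq_C_mul, map_add, map_neg, map_ofNat]
  ring
end

section
/- The map A_{λ,λ+2}(X d/dx)(f) = X⁽³⁾·f is a 1-cocycle on vect(1) with values in D_{λ,λ+2} that vanishes on sl(2) = span(d/dx, x d/dx, x² d/dx). -/
open Polynomial

/-- `A_{λ,λ+2}(X d/dx)(f) = X⁽³⁾·f`. -/
noncomputable def A2 (Xp f : Polynomial ℝ) : Polynomial ℝ := derivative^[3] Xp * f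

/-- `A_{λ,λ+2}` is a 1-cocycle on `vect(1)` with values in `D_{λ,λ+2}` that
vanishes on `sl(2) = span(d/dx, x d/dx, x² d/dx)` (vector fields `X d/dx` with
`deg X ≤ 2`). -/
theorem A2_cocycle_vanishing_sl2 (lam : ℝ) :
    (∀ Xp Yp f : Polynomial ℝ,
        A2 (Xp * derivative Yp - derivative Xp * Yp) f
          = Lact (lam + 2) Xp (A2 Yp f) - A2 Yp (Lact lam Xp f)
            - (Lact (lam + 2) Yp (A2 Xp f) - A2 Xp (Lact lam Yp f)))
    ∧ (∀ Xp : Polynomial ℝ, Xp.degree ≤ 2 → ∀ f : Polynomial ℝ, A2 Xp f = 0) := by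
  constructor
  · intro Xp Yp f
    simp only [A2, Lact, Function.iterate_succ, Function.iterate_zero, Function.comp_apply,
      id_eq, derivative_sub, derivative_add, derivative_mul, Polynomial.smul_eq_C_mul, map_add, map_ofNat]
    ring
  · intro Xp hX f
    have h : derivative^[3] Xp = 0 := by
      apply Polynomial.iterate_derivative_eq_zero
      have : Xp.natDegree ≤ 2 := Polynomial.natDegree_le_iff_degree_le.2 hX
      omega
    simp [A2, h]
end

section
/- The even map Υ_{λ,λ}(X_G)(F α^λ) = G'·F·α^λ is a 1-cocycle of the Lie superalgebra K(1) with values in D_{λ,λ}: for all homogeneous G, H ∈ K[x,θ], Υ_{λ,λ}(X_{{G,H}}) = L^{λ,λ}_{X_G}(Υ_{λ,λ}(X_H)) − (−1)^{p(G)p(H)} L^{λ,λ}_{X_H}(Υ_{λ,λ}(X_G)). -/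
open Polynomial

/-- The action `L^λ_{X_F}(G) = X_F(G) + λ F' G`, where
`X_F = F∂_x − (1/2)(−1)^{p(F)} η̄(F) η̄` and `ε = (−1)^{p(F)}`. -/
noncomputable def LD (lam : ℝ) (F : SP) (ε : ℝ) (G : SP) : SP :=
  pm F (dX G) - (ε / 2) • pm (etaBar F) (etaBar G) + lam • pm (dX F) G

/-- `Υ_{λ,λ}(X_G)(F α^λ) = G'·F·α^λ`. -/
noncomputable def Ups0 (G F : SP) : SP := pm (dX G) F

/-- The even map `Υ_{λ,λ}(X_G)(Fα^λ) = G'Fα^λ` is a 1-cocycle of `K(1)` with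
values in `D_{λ,λ}`:
`Υ(X_{{G,H}}) = L^{λ,λ}_{X_G}(Υ(X_H)) − (−1)^{p(G)p(H)} L^{λ,λ}_{X_H}(Υ(X_G))`,
where `L^{λ,λ}_{X_F}(A) = L^λ_{X_F}∘A − (−1)^{p(A)p(F)} A∘L^λ_{X_F}` and
`Υ(X_H)` has parity `p(H)`. -/
theorem Ups0_cocycle (lam : ℝ) (G H : SP) (pG pH : ℕ)
    (hG : homog G pG) (hH : homog H pH) (F : SP) :
    Ups0 (cb G H ((-1 : ℝ) ^ pG)) F
      = (LD lam G ((-1 : ℝ) ^ pG) (Ups0 H F)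
          - ((-1 : ℝ) ^ (pH * pG)) • Ups0 H (LD lam G ((-1 : ℝ) ^ pG) F))
        - ((-1 : ℝ) ^ (pG * pH)) •
          (LD lam H ((-1 : ℝ) ^ pH) (Ups0 G F)
            - ((-1 : ℝ) ^ (pG * pH)) • Ups0 G (LD lam H ((-1 : ℝ) ^ pH) F)) := by
  obtain ⟨g0, g1⟩ := G; obtain ⟨h0, h1⟩ := H; obtain ⟨f0, f1⟩ := F
  rcases hG with ⟨rfl, hG⟩ | ⟨rfl, hG⟩ <;> rcases hH with ⟨rfl, hH⟩ | ⟨rfl, hH⟩ <;>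
    simp only at hG hH <;> subst hG <;> subst hH <;>
    refine Prod.ext ?_ ?_ <;>
    simp [Ups0, cb, LD, pm, dX, etaBar, Prod.smul_def, smul_eq_mul,
      derivative_mul, pow_succ, smul_eq_C_mul, neg_div, map_neg] <;>
    ring
end
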